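/- Let G = SL₂(ℂ) act diagonally on V = 3R₁ = ℂ² ⊕ ℂ² ⊕ ℂ². Then G' = G, i.e., the only elements of GL(V) preserving all SL₂-invariant polynomials are the elements of the image of SL₂ acting diagonally. -/

import Mathlib

noncomputable section

/-- A function `V → ℂ` is a polynomial function if it lies in the subalgebra of
functions generated by the linear functionals, i.e. it is given by a polynomial
in linear coordinates. -/
def IsPolyFun {V : Type*} [AddCommGroup V] [Module ℂ V] (f : V → ℂ) : Prop :=
  f ∈ Algebra.adjoin ℂ (Set.range fun l : V →ₗ[ℂ] ℂ => (l : V → ℂ))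

/-- Given a subgroup `G` of `GL(V)`, the group `G'` of all linear automorphisms of `V`
preserving every `G`-invariant polynomial function on `V`. -/
def primeGroup {V : Type*} [AddCommGroup V] [Module ℂ V]
    (G : Subgroup (V ≃ₗ[ℂ] V)) : Subgroup (V ≃ₗ[ℂ] V) where
  carrier := {φ | ∀ f : V → ℂ, IsPolyFun f →
      (∀ g ∈ G, ∀ v : V, f (g v) = f v) → ∀ v : V, f (φ v) = f v}
  one_mem' := by intro f _ _ v; rfl
  mul_mem' := by
    intro a b ha hb f hf hinv v
    have h2 : f (a (b v)) = f (b v) := ha f hf hinv (b v)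
    exact h2.trans (hb f hf hinv v)
  inv_mem' := by
    intro a ha f hf hinv v
    have h := ha f hf hinv (a⁻¹ v)
    have : a (a⁻¹ v) = v := a.apply_symm_apply v
    rw [this] at h
    exact h.symm

/-- The algebraic exponential of an endomorphism of a finite-dimensional space
(intended for nilpotent endomorphisms, where the series is a finite sum). -/
def endExp {g : Type*} [AddCommGroup g] [Module ℂ g] [FiniteDimensional ℂ g]
    (A : Module.End ℂ g) : Module.End ℂ g :=
  ∑ k ∈ Finset.range (Module.finrank ℂ g + 1), (k.factorial : ℂ)⁻¹ • A ^ k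

/-- The adjoint group `G = Aut(g)⁰` of a semisimple Lie algebra `g`: the subgroup of
`GL(g)` generated by the exponentials of nilpotent inner derivations `ad x`. -/
def adjointGroup (g : Type*) [LieRing g] [LieAlgebra ℂ g] [FiniteDimensional ℂ g] :
    Subgroup (g ≃ₗ[ℂ] g) :=
  Subgroup.closure {u : g ≃ₗ[ℂ] g | ∃ x : g,
    IsNilpotent (LieAlgebra.ad ℂ g x) ∧ (u : g →ₗ[ℂ] g) = endExp (LieAlgebra.ad ℂ g x)}

/-- The subgroup of `GL(g)` fixing a subalgebra `t` pointwise. -/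
def pointwiseStab {g : Type*} [LieRing g] [LieAlgebra ℂ g]
    (t : LieSubalgebra ℂ g) : Subgroup (g ≃ₗ[ℂ] g) where
  carrier := {u | ∀ x ∈ t, u x = x}
  one_mem' := by intro x _; rfl
  mul_mem' := by
    intro a b ha hb x hx
    have : a (b x) = a x := by rw [hb x hx]
    exact this.trans (ha x hx)
  inv_mem' := by
    intro a ha x hx
    conv_lhs => rw [← ha x hx]
    exact a.symm_apply_apply x

/-- The maximal torus of the adjoint group corresponding to a Cartan subalgebra `t`:
the elements of the adjoint group acting trivially on `t`. -/
def maximalTorus (g : Type*) [LieRing g] [LieAlgebra ℂ g] [FiniteDimensional ℂ g]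
    (t : LieSubalgebra ℂ g) : Subgroup (g ≃ₗ[ℂ] g) :=
  adjointGroup g ⊓ pointwiseStab t

namespace Stmt13

/-- `SL₂(ℂ)` acting diagonally on `3R₁ = ℂ² ⊕ ℂ² ⊕ ℂ²`. -/
def diagSL2 : Matrix.SpecialLinearGroup (Fin 2) ℂ →*
    ((Fin 3 → Fin 2 → ℂ) ≃ₗ[ℂ] (Fin 3 → Fin 2 → ℂ)) :=
  MonoidHom.mk' (fun g => LinearEquiv.piCongrRight
      (fun _ : Fin 3 => Matrix.SpecialLinearGroup.toLin' g)) (by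
    intro a b
    apply LinearEquiv.ext
    intro v
    funext i
    simp [map_mul])

end Stmt13

/-!
The `2 × 2` minors `det (vᵢ, vⱼ)` of `v = (v₀, v₁, v₂)` are `SL₂`-invariant, so every `φ ∈ G'`
preserves them. The periods of `v ↦ det (vᵢ, vⱼ)` are exactly the vectors supported on the third
copy, and `φ` maps periods to periods, so `φ` acts block-diagonally by maps `gₖ`. Then
`det (gᵢ x, gⱼ y) = det (x, y)` for `i ≠ j`; comparing the identities for `(i, k)` and `(j, k)`,
with `gₖ` surjective, nondegeneracy of `det` gives `gᵢ = gⱼ`, and then `det g₀ = 1`.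
-/

open Matrix Function

theorem le_primeGroup {V : Type*} [AddCommGroup V] [Module ℂ V] (G : Subgroup (V ≃ₗ[ℂ] V)) :
    G ≤ primeGroup G :=
  fun g hg _ _ hinv v => hinv g hg v

theorem Function.Periodic.apply_of_invariant {M α : Type*} [Add M] {q : M → α} {e : M ≃+ M}
    (he : ∀ v, q (e v) = q v) {u : M} (hu : Periodic q u) : Periodic q (e u) := fun z =>
  calc q (z + e u) = q (e (e.symm z + u)) := by rw [map_add, e.apply_symm_apply]
    _ = q (e.symm z) := by rw [he, hu]
    _ = q z := by rw [← he, e.apply_symm_apply]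

section Det

variable {R : Type*} [CommRing R]

theorem det_of_pair (x y : Fin 2 → R) : (of ![x, y]).det = x 0 * y 1 - x 1 * y 0 :=
  det_fin_two _

theorem eq_zero_of_forall_det_eq_zero {x : Fin 2 → R} (h : ∀ y, (of ![x, y]).det = 0) :
    x = 0 := by
  have h0 : x 0 = 0 := by simpa [det_of_pair] using h ![0, 1]
  have h1 : x 1 = 0 := by simpa [det_of_pair] using h ![1, 0]
  exact funext <| Fin.forall_fin_two.2 ⟨h0, h1⟩

theorem eq_of_forall_det_eq {g h k : (Fin 2 → R) → Fin 2 → R} (hk : Surjective k)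
    (hg : ∀ x y, (of ![g x, k y]).det = (of ![x, y]).det)
    (hh : ∀ x y, (of ![h x, k y]).det = (of ![x, y]).det) : g = h := by
  funext x
  refine sub_eq_zero.1 (eq_zero_of_forall_det_eq_zero fun z => ?_)
  obtain ⟨y, rfl⟩ := hk z
  have hgh := (hg x y).trans (hh x y).symm
  rw [det_of_pair, det_of_pair] at hgh
  rw [det_of_pair, Pi.sub_apply, Pi.sub_apply]
  linear_combination hgh

theorem det_toMatrix'_eq_one {g : (Fin 2 → R) →ₗ[R] Fin 2 → R}
    (hg : ∀ x y, (of ![g x, g y]).det = (of ![x, y]).det) : (LinearMap.toMatrix' g).det = 1 := by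
  rw [← det_transpose]
  convert hg (Pi.single 0 1) (Pi.single 1 1) using 2
  · ext a b
    fin_cases a <;> simp [LinearMap.toMatrix'_apply]
  · simp [det_of_pair]

end Det

section Minor

variable {R ι : Type*} [CommRing R]

def minor (i j : ι) (v : ι → Fin 2 → R) : R := (of ![v i, v j]).det

theorem minor_mulVec (i j : ι) (A : Matrix (Fin 2) (Fin 2) R) (v : ι → Fin 2 → R) :
    minor i j (fun k => A *ᵥ v k) = A.det * minor i j v := by
  have hrows : of ![A *ᵥ v i, A *ᵥ v j] = of ![v i, v j] * Aᵀ := by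
    ext a b
    fin_cases a <;> fin_cases b <;> simp [mul_apply] <;> ring
  rw [minor, minor, hrows, det_mul, det_transpose, mul_comm]

theorem isPolyFun_minor (i j : ι) : IsPolyFun (minor i j : (ι → Fin 2 → ℂ) → ℂ) := by
  have hcoord (k : ι) (a : Fin 2) : IsPolyFun fun v : ι → Fin 2 → ℂ => v k a :=
    Algebra.subset_adjoin ⟨LinearMap.proj a ∘ₗ LinearMap.proj k, rfl⟩
  have hminor : minor i j = fun v : ι → Fin 2 → ℂ => v i 0 * v j 1 - v i 1 * v j 0 :=
    funext fun v => det_of_pair _ _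
  rw [hminor]
  exact sub_mem (mul_mem (hcoord i 0) (hcoord j 1)) (mul_mem (hcoord i 1) (hcoord j 0))

variable [DecidableEq ι]

theorem periodic_minor_iff {i j : ι} (hij : i ≠ j) {u : ι → Fin 2 → R} :
    Periodic (minor i j) u ↔ u i = 0 ∧ u j = 0 := by
  constructor
  · intro hu
    have h0 := hu 0
    have hi0 := hu (Pi.single i ![1, 0])
    have hi1 := hu (Pi.single i ![0, 1])
    have hj0 := hu (Pi.single j ![1, 0])
    have hj1 := hu (Pi.single j ![0, 1])
    simp only [minor, det_of_pair, Pi.add_apply, Pi.zero_apply, Pi.single_eq_same,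
      Pi.single_eq_of_ne hij, Pi.single_eq_of_ne hij.symm, zero_add, cons_val_zero,
      cons_val_one] at h0 hi0 hi1 hj0 hj1
    have ui0 : u i 0 = 0 := by linear_combination hj1 - h0
    have ui1 : u i 1 = 0 := by linear_combination h0 - hj0
    have uj0 : u j 0 = 0 := by linear_combination h0 - hi1
    have uj1 : u j 1 = 0 := by linear_combination hi0 - h0
    exact ⟨funext <| Fin.forall_fin_two.2 ⟨ui0, ui1⟩, funext <| Fin.forall_fin_two.2 ⟨uj0, uj1⟩⟩
  · rintro ⟨hi, hj⟩ z
    simp [minor, hi, hj]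

theorem map_single_apply_eq_zero {φ : (ι → Fin 2 → R) ≃+ (ι → Fin 2 → R)} {k l m : ι}
    (hlk : l ≠ k) (hmk : m ≠ k) (hlm : l ≠ m) (hφ : ∀ v, minor l m (φ v) = minor l m v)
    (x : Fin 2 → R) : φ (Pi.single k x) l = 0 := by
  have hx : Periodic (minor l m) (Pi.single k x) := (periodic_minor_iff hlm).2 (by simp [hlk, hmk])
  exact ((periodic_minor_iff hlm).1 (hx.apply_of_invariant hφ)).1

end Minor

section DiagBlock

variable {R ι M : Type*} [CommSemiring R] [AddCommMonoid M] [Module R M] [DecidableEq ι]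

def diagBlock (φ : (ι → M) →ₗ[R] ι → M) (k : ι) : M →ₗ[R] M :=
  LinearMap.proj k ∘ₗ φ ∘ₗ LinearMap.single R (fun _ => M) k

variable [Fintype ι] {φ : (ι → M) →ₗ[R] ι → M}

theorem apply_eq_diagBlock (h : ∀ k x l, l ≠ k → φ (Pi.single k x) l = 0) (v : ι → M) (k : ι) :
    φ v k = diagBlock φ k (v k) := by
  conv_lhs => rw [← Finset.univ_sum_single v]
  rw [map_sum, Finset.sum_apply, Finset.sum_eq_single k (fun l _ hlk => h l (v l) k hlk.symm)
    (by simp)]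
  rfl

theorem diagBlock_surjective (hφ : Surjective φ) (h : ∀ k x l, l ≠ k → φ (Pi.single k x) l = 0)
    (k : ι) : Surjective (diagBlock φ k) := fun y => by
  obtain ⟨w, hw⟩ := hφ (Pi.single k y)
  exact ⟨w k, by rw [← apply_eq_diagBlock h, hw, Pi.single_eq_same]⟩

end DiagBlock

namespace Stmt13

theorem minor_diagSL2 (i j : Fin 3) (A : SpecialLinearGroup (Fin 2) ℂ) (v : Fin 3 → Fin 2 → ℂ) :
    minor i j (diagSL2 A v) = minor i j v := by
  have hA : diagSL2 A v = fun k => (A : Matrix (Fin 2) (Fin 2) ℂ) *ᵥ v k := rfl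
  rw [hA, minor_mulVec, A.det_coe, one_mul]

theorem mem_range_diagSL2_of_forall_minor {φ : (Fin 3 → Fin 2 → ℂ) ≃ₗ[ℂ] (Fin 3 → Fin 2 → ℂ)}
    (hφ : ∀ i j v, minor i j (φ v) = minor i j v) : φ ∈ diagSL2.range := by
  have third : ∀ k l : Fin 3, ∃ m, m ≠ k ∧ m ≠ l := by decide
  set g := diagBlock (φ : (Fin 3 → Fin 2 → ℂ) →ₗ[ℂ] _)
  have hdiag : ∀ k x l, l ≠ k → φ (Pi.single k x) l = 0 := fun k x l hlk => by
    obtain ⟨m, hmk, hml⟩ := third k l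
    exact map_single_apply_eq_zero (φ := φ.toAddEquiv) hlk hmk (Ne.symm hml) (hφ l m) x
  have hg : ∀ v k, φ v k = g k (v k) := apply_eq_diagBlock hdiag
  have hdet : ∀ i j, i ≠ j → ∀ x y, (of ![g i x, g j y]).det = (of ![x, y]).det := by
    intro i j hij x y
    have h := hφ i j (Pi.single i x + Pi.single j y)
    simp only [minor, hg, Pi.add_apply, Pi.single_eq_same, Pi.single_eq_of_ne hij,
      Pi.single_eq_of_ne hij.symm, add_zero, zero_add] at h
    exact h
  have hgeq : ∀ i, g i = g 0 := fun i => by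
    obtain ⟨k, hki, hk0⟩ := third i 0
    exact LinearMap.coe_injective <| eq_of_forall_det_eq
      (diagBlock_surjective φ.surjective hdiag k) (hdet i k hki.symm) (hdet 0 k hk0.symm)
  have hdet1 : (LinearMap.toMatrix' (g 0)).det = 1 :=
    det_toMatrix'_eq_one (hgeq 1 ▸ hdet 0 1 (by decide))
  refine ⟨⟨_, hdet1⟩, LinearEquiv.ext fun v => funext fun k => ?_⟩
  rw [hg, hgeq k]
  exact LinearMap.congr_fun (Matrix.toLin'_toMatrix' (g 0)) (v k)

/-- Let `G = SL₂(ℂ)` act diagonally on `V = 3R₁ = ℂ² ⊕ ℂ² ⊕ ℂ²`.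
Then `G' = G`: the only elements of `GL(V)` preserving all `SL₂`-invariant polynomials
are the elements of the image of `SL₂` acting diagonally. -/
theorem stmt13 : primeGroup diagSL2.range = diagSL2.range := by
  refine le_antisymm (fun φ hφ => mem_range_diagSL2_of_forall_minor fun i j => ?_)
    (le_primeGroup _)
  refine hφ _ (isPolyFun_minor i j) ?_
  rintro _ ⟨A, rfl⟩
  exact minor_diagSL2 i j A

end Stmt13
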